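/- Let F = {log f_n} be a superadditive sequence of positive continuous functions with bounded variation (constant M) on a one-sided subshift X with the strong specification property with specification number k, and suppose there exists C₁ ≥ 1 such that Σ_{v∈F_{n+k}(u)} f_{m+n+k}(x_{uv}) ≤ C₁ f_m(x_u) Σ_{v∈B_n(X)} f_n(x_v) for all m, n, u and choices of points. Then the partition sums Z_n(F) = Σ_{u∈B_n(X)} sup{f_n(x) : x ∈ [u]} satisfy: there exists a constant C̃ > 0 such that Z_{m+n}(F) ≤ C̃ Z_m(F) Z_n(F) for all m, n ∈ ℕ. -/
import Mathlib


open scoped Classical BigOperators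
open Filter MeasureTheory

namespace Paper

/-- Points of the full one-sided shift over `k` symbols. -/
abbrev Pt (k : ℕ) := ℕ → Fin k

variable {k : ℕ}

/-- The one-sided shift map. -/
def shift (x : Pt k) : Pt k := fun n => x (n + 1)

/-- A one-sided subshift: a closed shift-invariant subset. -/
def IsSubshift (X : Set (Pt k)) : Prop := IsClosed X ∧ ∀ x ∈ X, shift x ∈ X

/-- The cylinder set `[u]` of a word `u` of length `n` inside `X`. -/
def cylinder (X : Set (Pt k)) {n : ℕ} (u : Fin n → Fin k) : Set (Pt k) :=
  {x | x ∈ X ∧ ∀ i : Fin n, x (i : ℕ) = u i}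

/-- A word is allowable if its cylinder in `X` is nonempty. -/
def Allowable (X : Set (Pt k)) {n : ℕ} (u : Fin n → Fin k) : Prop :=
  (cylinder X u).Nonempty

/-- `B_n(X)`: the finite set of allowable words of length `n`. -/
noncomputable def words (X : Set (Pt k)) (n : ℕ) : Finset (Fin n → Fin k) :=
  Finset.univ.filter fun u => Allowable X u

/-- `F_n(u)`: words `v` of length `n` with `uv` allowable. -/
noncomputable def Fext (X : Set (Pt k)) {m : ℕ} (u : Fin m → Fin k) (n : ℕ) :
    Finset (Fin n → Fin k) :=
  Finset.univ.filter fun v => Allowable X (Fin.append u v)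

/-- `P_n(u)`: words `v` of length `n` with `vu` allowable. -/
noncomputable def Pext (X : Set (Pt k)) {m : ℕ} (u : Fin m → Fin k) (n : ℕ) :
    Finset (Fin n → Fin k) :=
  Finset.univ.filter fun v => Allowable X (Fin.append v u)

/-- `F = {log f_n}` is a sequence of positive continuous functions on `X`. -/
def GoodSeq (X : Set (Pt k)) (f : ℕ → Pt k → ℝ) : Prop :=
  ∀ n, ContinuousOn (f n) X ∧ ∀ x ∈ X, 0 < f n x

/-- The right balanced condition with constant `C` and threshold `K`. -/
def RightBalancedWith (X : Set (Pt k)) (f : ℕ → Pt k → ℝ) (C : ℝ) (K : ℕ) : Prop :=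
  ∀ m n : ℕ, 0 < m → K ≤ n → ∀ u : Fin m → Fin k, u ∈ words X m →
    ∀ xu ∈ cylinder X u,
    ∀ y : (Fin n → Fin k) → Pt k,
      (∀ v ∈ Fext X u n, y v ∈ cylinder X (Fin.append u v)) →
    ∀ z : (Fin n → Fin k) → Pt k,
      (∀ w ∈ words X n, z w ∈ cylinder X w) →
      1 / C ≤ (∑ v ∈ Fext X u n, f (m + n) (y v)) /
          (f m xu * ∑ w ∈ words X n, f n (z w)) ∧
      (∑ v ∈ Fext X u n, f (m + n) (y v)) /
          (f m xu * ∑ w ∈ words X n, f n (z w)) ≤ C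

/-- The left balanced condition with constant `C` and threshold `K`. -/
def LeftBalancedWith (X : Set (Pt k)) (f : ℕ → Pt k → ℝ) (C : ℝ) (K : ℕ) : Prop :=
  ∀ m n : ℕ, 0 < m → K ≤ n → ∀ u : Fin m → Fin k, u ∈ words X m →
    ∀ xu ∈ cylinder X u,
    ∀ y : (Fin n → Fin k) → Pt k,
      (∀ v ∈ Pext X u n, y v ∈ cylinder X (Fin.append v u)) →
    ∀ z : (Fin n → Fin k) → Pt k,
      (∀ w ∈ words X n, z w ∈ cylinder X w) →
      1 / C ≤ (∑ v ∈ Pext X u n, f (n + m) (y v)) /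
          (f m xu * ∑ w ∈ words X n, f n (z w)) ∧
      (∑ v ∈ Pext X u n, f (n + m) (y v)) /
          (f m xu * ∑ w ∈ words X n, f n (z w)) ≤ C

def RightBalanced (X : Set (Pt k)) (f : ℕ → Pt k → ℝ) : Prop :=
  ∃ C : ℝ, 1 ≤ C ∧ ∃ K : ℕ, 1 ≤ K ∧ RightBalancedWith X f C K

def LeftBalanced (X : Set (Pt k)) (f : ℕ → Pt k → ℝ) : Prop :=
  ∃ C : ℝ, 1 ≤ C ∧ ∃ K : ℕ, 1 ≤ K ∧ LeftBalancedWith X f C K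

def Balanced (X : Set (Pt k)) (f : ℕ → Pt k → ℝ) : Prop :=
  RightBalanced X f ∧ LeftBalanced X f

/-- Boundedly supermultiplicative with constant `C` and threshold `K`. -/
def BSMWith (X : Set (Pt k)) (f : ℕ → Pt k → ℝ) (C : ℝ) (K : ℕ) : Prop :=
  ∀ m n : ℕ, 0 < m → K ≤ n →
    ∀ a : (Fin m → Fin k) → Pt k, (∀ u ∈ words X m, a u ∈ cylinder X u) →
    ∀ b : (Fin n → Fin k) → Pt k, (∀ v ∈ words X n, b v ∈ cylinder X v) →
    ∀ c : (Fin (m + n) → Fin k) → Pt k, (∀ w ∈ words X (m + n), c w ∈ cylinder X w) →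
      1 / C ≤ ((∑ u ∈ words X m, f m (a u)) * (∑ v ∈ words X n, f n (b v))) /
          (∑ w ∈ words X (m + n), f (m + n) (c w)) ∧
      ((∑ u ∈ words X m, f m (a u)) * (∑ v ∈ words X n, f n (b v))) /
          (∑ w ∈ words X (m + n), f (m + n) (c w)) ≤ C

def BSM (X : Set (Pt k)) (f : ℕ → Pt k → ℝ) : Prop :=
  ∃ C : ℝ, 1 ≤ C ∧ ∃ K : ℕ, 1 ≤ K ∧ BSMWith X f C K

/-- The Gibbs inequality for `μ` with pressure constant `P` and constant `C`. -/
def GibbsWith (X : Set (Pt k)) (f : ℕ → Pt k → ℝ) (μ : Measure (Pt k)) (P C : ℝ) : Prop :=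
  ∀ n : ℕ, 0 < n → ∀ u : Fin n → Fin k, u ∈ words X n → ∀ x ∈ cylinder X u,
    1 / C ≤ (μ (cylinder X u)).toReal / (Real.exp (-(n : ℝ) * P) * f n x) ∧
    (μ (cylinder X u)).toReal / (Real.exp (-(n : ℝ) * P) * f n x) ≤ C

/-- `μ` is a (Borel probability) Gibbs measure on `X` for the sequence `f`. -/
def IsGibbs (X : Set (Pt k)) (f : ℕ → Pt k → ℝ) (μ : Measure (Pt k)) : Prop :=
  IsProbabilityMeasure μ ∧ μ Xᶜ = 0 ∧ ∃ P C : ℝ, 0 < C ∧ GibbsWith X f μ P C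

/-- Shift invariance of a measure. -/
def InvariantM (μ : Measure (Pt k)) : Prop :=
  ∀ s : Set (Pt k), MeasurableSet s → μ (shift ⁻¹' s) = μ s

/-- Ergodicity of a measure with respect to the shift. -/
def ErgodicM (μ : Measure (Pt k)) : Prop :=
  ∀ s : Set (Pt k), MeasurableSet s → shift ⁻¹' s = s → μ s = 0 ∨ μ s = 1

/-- Subadditivity of the sequence with constant `C`. -/
def SubaddWith (X : Set (Pt k)) (f : ℕ → Pt k → ℝ) (C : ℝ) : Prop :=
  0 ≤ C ∧ ∀ x ∈ X, ∀ m n : ℕ, f (m + n) x ≤ Real.exp C * (f m x * f n (shift^[m] x))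

def Subadditive (X : Set (Pt k)) (f : ℕ → Pt k → ℝ) : Prop := ∃ C, SubaddWith X f C

/-- Superadditivity of the sequence with constant `C`. -/
def SuperaddWith (X : Set (Pt k)) (f : ℕ → Pt k → ℝ) (C : ℝ) : Prop :=
  0 ≤ C ∧ ∀ x ∈ X, ∀ m n : ℕ, Real.exp (-C) * (f m x * f n (shift^[m] x)) ≤ f (m + n) x

def Superadditive (X : Set (Pt k)) (f : ℕ → Pt k → ℝ) : Prop := ∃ C, SuperaddWith X f C

/-- Bounded variation with constant `M`. -/
def BddVarWith (X : Set (Pt k)) (f : ℕ → Pt k → ℝ) (M : ℝ) : Prop :=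
  1 ≤ M ∧ ∀ n : ℕ, ∀ x ∈ X, ∀ y ∈ X, (∀ i < n, x i = y i) → f n x / f n y ≤ M

def BddVar (X : Set (Pt k)) (f : ℕ → Pt k → ℝ) : Prop := ∃ M, BddVarWith X f M

/-- The partition sums `Z_n(F)`. -/
noncomputable def Zn (X : Set (Pt k)) (f : ℕ → Pt k → ℝ) (n : ℕ) : ℝ :=
  ∑ u ∈ words X n, sSup (f n '' cylinder X u)

/-- The topological pressure `P(F) = limsup (1/n) log Z_n(F)`. -/
noncomputable def pressure (X : Set (Pt k)) (f : ℕ → Pt k → ℝ) : ℝ :=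
  Filter.limsup (fun n : ℕ => Real.log (Zn X f n) / n) atTop

/-- Condition (C2): quasi-multiplicativity. -/
def QuasiMult (X : Set (Pt k)) (f : ℕ → Pt k → ℝ) : Prop :=
  ∃ k₀ : ℕ, ∃ D : ℝ, 0 < D ∧ D < 1 ∧
    ∀ (m n : ℕ) (u : Fin m → Fin k) (v : Fin n → Fin k),
      Allowable X u → Allowable X v →
      ∃ i, i ≤ k₀ ∧ ∃ w : Fin i → Fin k,
        Allowable X (Fin.append (Fin.append u w) v) ∧
        D * sSup (f m '' cylinder X u) * sSup (f n '' cylinder X v) ≤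
          sSup (f (m + i + n) '' cylinder X (Fin.append (Fin.append u w) v))

/-- Strong specification property with specification number `s`. -/
def StrongSpec (X : Set (Pt k)) (s : ℕ) : Prop :=
  ∀ (m n : ℕ) (u : Fin m → Fin k) (v : Fin n → Fin k),
    Allowable X u → Allowable X v →
    ∃ w : Fin s → Fin k, Allowable X (Fin.append (Fin.append u w) v)

/-- Irreducibility of a subshift. -/
def IrreducibleShift (X : Set (Pt k)) : Prop :=
  ∀ (m n : ℕ) (u : Fin m → Fin k) (v : Fin n → Fin k),
    Allowable X u → Allowable X v →
    ∃ (l : ℕ) (w : Fin l → Fin k), Allowable X (Fin.append (Fin.append u w) v)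

/-- The `n`-th partition entropy of `μ`. -/
noncomputable def Hn (X : Set (Pt k)) (μ : Measure (Pt k)) (n : ℕ) : ℝ :=
  -∑ u ∈ words X n, (μ (cylinder X u)).toReal * Real.log (μ (cylinder X u)).toReal

/-- Measure-theoretic entropy of an invariant measure on a subshift. -/
noncomputable def entropy (X : Set (Pt k)) (μ : Measure (Pt k)) : ℝ :=
  ⨅ n : ℕ, Hn X μ (n + 1) / (n + 1)

/-- The key partition-sum bound appearing in Lemma 2.2. -/
def KeyBound (X : Set (Pt k)) (f : ℕ → Pt k → ℝ) (C P : ℝ) : Prop :=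
  ∀ n : ℕ, 0 < n → ∀ z : (Fin n → Fin k) → Pt k,
    (∀ u ∈ words X n, z u ∈ cylinder X u) →
    1 / C ≤ Real.exp ((n : ℝ) * P) / (∑ u ∈ words X n, f n (z u)) ∧
    Real.exp ((n : ℝ) * P) / (∑ u ∈ words X n, f n (z u)) ≤ C


lemma append_apply_lt' {k m n : ℕ} (u : Fin m → Fin k) (v : Fin n → Fin k)
    (i : Fin (m + n)) (h : (i : ℕ) < m) : Fin.append u v i = u ⟨(i : ℕ), h⟩ := by
  have hi : i = Fin.castAdd n ⟨(i : ℕ), h⟩ := by ext; simp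
  conv_lhs => rw [hi]
  exact Fin.append_left _ _ _

lemma append_apply_ge' {k m n : ℕ} (u : Fin m → Fin k) (v : Fin n → Fin k)
    (j : ℕ) (hj : j < n) (h2 : m + j < m + n) :
    Fin.append u v ⟨m + j, h2⟩ = v ⟨j, hj⟩ := by
  have hi : (⟨m + j, h2⟩ : Fin (m + n)) = Fin.natAdd m ⟨j, hj⟩ := by ext; simp
  conv_lhs => rw [hi]
  exact Fin.append_right _ _ _

lemma append_extract' {k m n : ℕ} (w : Fin (m + n) → Fin k) :
    Fin.append (fun i => w (Fin.castAdd n i)) (fun j => w (Fin.natAdd m j)) = w := by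
  funext i
  refine Fin.addCases (fun i => ?_) (fun j => ?_) i
  · rw [Fin.append_left]
  · rw [Fin.append_right]

lemma mem_words_iff {k N : ℕ} {X : Set (Pt k)} {w : Fin N → Fin k} :
    w ∈ words X N ↔ Allowable X w := by simp [words]

lemma mem_Fext_iff {k m N : ℕ} {X : Set (Pt k)} {u : Fin m → Fin k} {v : Fin N → Fin k} :
    v ∈ Fext X u N ↔ Allowable X (Fin.append u v) := by simp [Fext]

lemma shift_iter_mem {k : ℕ} {X : Set (Pt k)} (hX : IsSubshift X) :
    ∀ (j : ℕ), ∀ x ∈ X, shift^[j] x ∈ X := by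
  intro j
  induction j with
  | zero => intro x hx; simpa using hx
  | succ j ih =>
      intro x hx
      rw [Function.iterate_succ_apply']
      exact hX.2 _ (ih x hx)

/-- under the hypotheses of Theorem 3.4(i), the partition sums are
submultiplicative up to a constant. -/
theorem stmt12 {k : ℕ} (k₀ : ℕ) (X : Set (Pt k)) (f : ℕ → Pt k → ℝ)
    (hX : IsSubshift X) (hf : GoodSeq X f)
    (C M : ℝ) (hsup : SuperaddWith X f C) (hbv : BddVarWith X f M)
    (hspec : StrongSpec X k₀)
    (C₁ : ℝ) (hC₁ : 1 ≤ C₁)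
    (hbound : ∀ m n : ℕ, 0 < m → 0 < n → ∀ u : Fin m → Fin k, u ∈ words X m →
      ∀ xu ∈ cylinder X u,
      ∀ y : (Fin (n + k₀) → Fin k) → Pt k,
        (∀ v ∈ Fext X u (n + k₀), y v ∈ cylinder X (Fin.append u v)) →
      ∀ z : (Fin n → Fin k) → Pt k,
        (∀ w ∈ words X n, z w ∈ cylinder X w) →
        (∑ v ∈ Fext X u (n + k₀), f (m + n + k₀) (y v)) ≤
          C₁ * (f m xu * ∑ w ∈ words X n, f n (z w))) :
    ∃ Ct : ℝ, 0 < Ct ∧ ∀ m n : ℕ, 0 < m → 0 < n →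
      Zn X f (m + n) ≤ Ct * Zn X f m * Zn X f n := by
  classical
  obtain ⟨hC0, hsup'⟩ := hsup
  obtain ⟨hM1, hbv'⟩ := hbv
  have hM0 : (0 : ℝ) < M := lt_of_lt_of_le one_pos hM1
  have hC₁0 : (0 : ℝ) < C₁ := lt_of_lt_of_le one_pos hC₁
  by_cases hXne : X.Nonempty
  swap
  · refine ⟨1, one_pos, ?_⟩
    intro m n _ _
    have hw : ∀ N, words X N = (∅ : Finset (Fin N → Fin k)) := by
      intro N
      refine Finset.eq_empty_of_forall_notMem ?_
      intro u hu
      obtain ⟨x, hx⟩ := (mem_words_iff.mp hu)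
      exact hXne ⟨x, hx.1⟩
    simp [Zn, hw]
  obtain ⟨x₀, hx₀⟩ := hXne
  -- a positive lower bound for `f k₀` on the compact set `X`
  have hcomp : IsCompact X := hX.1.isCompact
  obtain ⟨zmin, hzmin, hminOn⟩ := hcomp.exists_isMinOn ⟨x₀, hx₀⟩ (hf k₀).1
  set ε := f k₀ zmin with hεdef
  have hε : 0 < ε := (hf k₀).2 zmin hzmin
  have hεle : ∀ x ∈ X, ε ≤ f k₀ x := fun x hx => isMinOn_iff.mp hminOn x hx
  -- a choice of a point in each allowable cylinder
  set P : (N : ℕ) → (Fin N → Fin k) → Pt k :=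
    fun N w => if h : Allowable X w then h.choose else x₀ with hPdef
  have hP : ∀ (N : ℕ) (w : Fin N → Fin k), Allowable X w → P N w ∈ cylinder X w := by
    intro N w h
    simp only [hPdef, dif_pos h]
    exact h.choose_spec
  have hPX : ∀ (N : ℕ) (w : Fin N → Fin k), P N w ∈ X := by
    intro N w
    by_cases h : Allowable X w
    · exact (hP N w h).1
    · simp only [hPdef, dif_neg h]; exact hx₀
  have hfpos : ∀ (N : ℕ) (x : Pt k), x ∈ X → 0 < f N x := fun N x hx => (hf N).2 x hx
  -- bounded variation in a convenient form
  have key : ∀ (N : ℕ) (x y : Pt k), x ∈ X → y ∈ X → (∀ i < N, x i = y i) →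
      f N x ≤ M * f N y := by
    intro N x y hx hy hxy
    exact (div_le_iff₀ (hfpos N y hy)).mp (hbv' N x hx y hy hxy)
  have himg : ∀ (N : ℕ) (w : Fin N → Fin k), w ∈ words X N →
      ∀ z ∈ f N '' cylinder X w, z ≤ M * f N (P N w) := by
    intro N w hw z hz
    obtain ⟨y, hy, rfl⟩ := hz
    refine key N y (P N w) hy.1 (hPX N w) ?_
    intro i hi
    exact (hy.2 ⟨i, hi⟩).trans ((hP N w (mem_words_iff.mp hw)).2 ⟨i, hi⟩).symm
  have hsuple : ∀ (N : ℕ) (w : Fin N → Fin k), w ∈ words X N →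
      sSup (f N '' cylinder X w) ≤ M * f N (P N w) := by
    intro N w hw
    exact Real.sSup_le (himg N w hw)
      (mul_nonneg hM0.le (hfpos N _ (hPX N w)).le)
  have hlesup : ∀ (N : ℕ) (w : Fin N → Fin k), w ∈ words X N →
      f N (P N w) ≤ sSup (f N '' cylinder X w) := by
    intro N w hw
    refine le_csSup ⟨M * f N (P N w), fun z hz => himg N w hw z hz⟩ ?_
    exact ⟨P N w, hP N w (mem_words_iff.mp hw), rfl⟩
  have hZge : ∀ N : ℕ, ∑ u ∈ words X N, f N (P N u) ≤ Zn X f N :=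
    fun N => Finset.sum_le_sum fun u hu => hlesup N u hu
  have hSnn : ∀ N : ℕ, (0 : ℝ) ≤ ∑ u ∈ words X N, f N (P N u) :=
    fun N => Finset.sum_nonneg fun u _ => (hfpos N _ (hPX N u)).le
  have hZnn : ∀ N : ℕ, (0 : ℝ) ≤ Zn X f N := fun N => le_trans (hSnn N) (hZge N)
  refine ⟨M ^ 2 * Real.exp C * C₁ / ε,
    div_pos (mul_pos (mul_pos (pow_pos hM0 2) (Real.exp_pos C)) hC₁0) hε, ?_⟩
  intro m n hm hn
  -- Step A: bound the sup by values at chosen points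
  have stepA : Zn X f (m + n) ≤ M * ∑ w ∈ words X (m + n), f (m + n) (P (m + n) w) := by
    rw [Finset.mul_sum]
    exact Finset.sum_le_sum fun w hw => hsuple (m + n) w hw
  -- Step B: split the sum over words of length m+n
  have stepB : ∑ w ∈ words X (m + n), f (m + n) (P (m + n) w)
      = ∑ u ∈ words X m, ∑ v ∈ Fext X u n, f (m + n) (P (m + n) (Fin.append u v)) := by
    rw [Finset.sum_sigma' (words X m) (fun u => Fext X u n)
      (fun u v => f (m + n) (P (m + n) (Fin.append u v)))]
    refine Finset.sum_nbij'
      (i := fun w => (⟨fun i => w (Fin.castAdd n i), fun j => w (Fin.natAdd m j)⟩ :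
        Σ _u : Fin m → Fin k, Fin n → Fin k))
      (j := fun p => Fin.append p.1 p.2) ?_ ?_ ?_ ?_ ?_
    · intro w hw
      obtain ⟨x, hx⟩ := mem_words_iff.mp hw
      rw [Finset.mem_sigma]
      constructor
      · exact mem_words_iff.mpr ⟨x, hx.1, fun i => hx.2 (Fin.castAdd n i)⟩
      · rw [mem_Fext_iff, append_extract']
        exact ⟨x, hx⟩
    · intro p hp
      rw [Finset.mem_sigma] at hp
      exact mem_words_iff.mpr (mem_Fext_iff.mp hp.2)
    · intro w _; exact append_extract' w
    · rintro ⟨u, v⟩ _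
      have h1 : (fun i => Fin.append u v (Fin.castAdd n i)) = u :=
        funext fun i => Fin.append_left _ _ _
      have h2 : (fun j => Fin.append u v (Fin.natAdd m j)) = v :=
        funext fun j => Fin.append_right _ _ _
      exact Sigma.ext h1 (heq_of_eq h2)
    · intro w _
      rw [append_extract']
  -- Step C: the inner sum bound
  have stepC : ∀ u ∈ words X m,
      ∑ v ∈ Fext X u n, f (m + n) (P (m + n) (Fin.append u v)) ≤
        M * Real.exp C / ε *
          (C₁ * (f m (P m u) * ∑ w ∈ words X n, f n (P n w))) := by
    intro u hu
    set y : (Fin (n + k₀) → Fin k) → Pt k :=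
      fun v' => P (m + (n + k₀)) (Fin.append u v') with hydef
    have hy : ∀ v' ∈ Fext X u (n + k₀), y v' ∈ cylinder X (Fin.append u v') :=
      fun v' hv' => hP _ _ (mem_Fext_iff.mp hv')
    set E : (Fin n → Fin k) → (Fin (n + k₀) → Fin k) :=
      fun v j => P (m + n) (Fin.append u v) (m + (j : ℕ)) with hEdef
    have hxc : ∀ v : Fin n → Fin k, v ∈ Fext X u n →
        P (m + n) (Fin.append u v) ∈ cylinder X (Fin.append u v) :=
      fun v hv => hP _ _ (mem_Fext_iff.mp hv)
    -- E v extends v and stays allowable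
    have hEcoord : ∀ v ∈ Fext X u n, ∀ (j : ℕ) (hj : j < n),
        E v ⟨j, by omega⟩ = v ⟨j, hj⟩ := by
      intro v hv j hj
      have h := (hxc v hv).2 ⟨m + j, by omega⟩
      rw [append_apply_ge' u v j hj (by omega)] at h
      exact h
    have hE : ∀ v ∈ Fext X u n, E v ∈ Fext X u (n + k₀) := by
      intro v hv
      refine mem_Fext_iff.mpr ⟨P (m + n) (Fin.append u v), (hxc v hv).1, ?_⟩
      intro i
      rcases lt_or_ge (i : ℕ) m with h | h
      · rw [append_apply_lt' u (E v) i h]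
        have h2 := (hxc v hv).2 ⟨(i : ℕ), by omega⟩
        rw [append_apply_lt' u v ⟨(i : ℕ), by omega⟩ h] at h2
        exact h2
      · have hj : (i : ℕ) - m < n + k₀ := by omega
        have hi : i = (⟨m + ((i : ℕ) - m), by omega⟩ : Fin (m + (n + k₀))) := by
          ext; simp; omega
        rw [hi, append_apply_ge' u (E v) ((i : ℕ) - m) hj]
    have hEinj : ∀ v1 ∈ Fext X u n, ∀ v2 ∈ Fext X u n, E v1 = E v2 → v1 = v2 := by
      intro v1 h1 v2 h2 he
      funext j
      have e1 := hEcoord v1 h1 (j : ℕ) j.2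
      have e2 := hEcoord v2 h2 (j : ℕ) j.2
      rw [he] at e1
      simpa using e1.symm.trans e2
    -- per-term bound
    have hterm : ∀ v ∈ Fext X u n,
        f (m + n) (P (m + n) (Fin.append u v)) ≤
          M * Real.exp C / ε * f (m + n + k₀) (y (E v)) := by
      intro v hv
      set x := P (m + n) (Fin.append u v) with hxdef
      set yv := y (E v) with hyvdef
      have hyvc : yv ∈ cylinder X (Fin.append u (E v)) := hy _ (hE v hv)
      have hagree : ∀ i < m + n, x i = yv i := by
        intro i hi
        rcases lt_or_ge i m with h | h
        · have e1 := (hxc v hv).2 ⟨i, hi⟩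
          have e2 := hyvc.2 ⟨i, by omega⟩
          rw [append_apply_lt' u v ⟨i, hi⟩ h] at e1
          rw [append_apply_lt' u (E v) ⟨i, by omega⟩ h] at e2
          exact e1.trans e2.symm
        · have hj : i - m < n + k₀ := by omega
          have e2 := hyvc.2 ⟨m + (i - m), by omega⟩
          rw [append_apply_ge' u (E v) (i - m) hj] at e2
          have e3 : yv (m + (i - m)) = x (m + (i - m)) := e2
          have hmi : m + (i - m) = i := by omega
          rw [hmi] at e3
          exact e3.symm
      have h1 : f (m + n) x ≤ M * f (m + n) yv :=
        key (m + n) x yv (hPX _ _) hyvc.1 hagree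
      have h2 := hsup' yv hyvc.1 (m + n) k₀
      have h3 : ε ≤ f k₀ (shift^[m + n] yv) := hεle _ (shift_iter_mem hX (m + n) yv hyvc.1)
      have hy1 : 0 < f (m + n) yv := hfpos _ _ hyvc.1
      have e1 : Real.exp (-C) * (f (m + n) yv * ε) ≤ f (m + n + k₀) yv := by
        refine le_trans ?_ h2
        apply mul_le_mul_of_nonneg_left _ (Real.exp_pos (-C)).le
        exact mul_le_mul_of_nonneg_left h3 hy1.le
      have e2 : f (m + n) yv ≤ Real.exp C / ε * f (m + n + k₀) yv := by
        rw [div_mul_eq_mul_div, le_div_iff₀ hε]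
        calc f (m + n) yv * ε
            = Real.exp C * (Real.exp (-C) * (f (m + n) yv * ε)) := by
              rw [← mul_assoc, ← Real.exp_add]; simp
          _ ≤ Real.exp C * f (m + n + k₀) yv :=
              mul_le_mul_of_nonneg_left e1 (Real.exp_pos C).le
      calc f (m + n) x ≤ M * f (m + n) yv := h1
        _ ≤ M * (Real.exp C / ε * f (m + n + k₀) yv) :=
            mul_le_mul_of_nonneg_left e2 hM0.le
        _ = M * Real.exp C / ε * f (m + n + k₀) yv := by ring
    -- sum the per-term bounds and inject into Fext u (n+k₀)
    have hsum1 : ∑ v ∈ Fext X u n, f (m + n) (P (m + n) (Fin.append u v)) ≤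
        M * Real.exp C / ε * ∑ v ∈ Fext X u n, f (m + n + k₀) (y (E v)) := by
      rw [Finset.mul_sum]
      exact Finset.sum_le_sum hterm
    have hsum2 : ∑ v ∈ Fext X u n, f (m + n + k₀) (y (E v)) ≤
        ∑ v' ∈ Fext X u (n + k₀), f (m + n + k₀) (y v') := by
      calc ∑ v ∈ Fext X u n, f (m + n + k₀) (y (E v))
          = ∑ v' ∈ (Fext X u n).image E, f (m + n + k₀) (y v') :=
            (Finset.sum_image (f := fun v' => f (m + n + k₀) (y v')) hEinj).symm
        _ ≤ ∑ v' ∈ Fext X u (n + k₀), f (m + n + k₀) (y v') := by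
            refine Finset.sum_le_sum_of_subset_of_nonneg ?_ ?_
            · intro v' hv'
              obtain ⟨v, hv, rfl⟩ := Finset.mem_image.mp hv'
              exact hE v hv
            · intro v' _ _
              exact (hfpos _ _ (hPX _ _)).le
    have hsum3 : ∑ v' ∈ Fext X u (n + k₀), f (m + n + k₀) (y v') ≤
        C₁ * (f m (P m u) * ∑ w ∈ words X n, f n (P n w)) :=
      hbound m n hm hn u hu (P m u) (hP m u (mem_words_iff.mp hu)) y hy
        (fun w => P n w) (fun w hw => hP n w (mem_words_iff.mp hw))
    calc ∑ v ∈ Fext X u n, f (m + n) (P (m + n) (Fin.append u v))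
        ≤ M * Real.exp C / ε * ∑ v ∈ Fext X u n, f (m + n + k₀) (y (E v)) := hsum1
      _ ≤ M * Real.exp C / ε * ∑ v' ∈ Fext X u (n + k₀), f (m + n + k₀) (y v') := by
          apply mul_le_mul_of_nonneg_left hsum2
          positivity
      _ ≤ M * Real.exp C / ε * (C₁ * (f m (P m u) * ∑ w ∈ words X n, f n (P n w))) := by
          apply mul_le_mul_of_nonneg_left hsum3
          positivity
  -- assemble
  have main : Zn X f (m + n) ≤
      M ^ 2 * Real.exp C * C₁ / ε *
        ((∑ u ∈ words X m, f m (P m u)) * ∑ w ∈ words X n, f n (P n w)) := by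
    calc Zn X f (m + n)
        ≤ M * ∑ w ∈ words X (m + n), f (m + n) (P (m + n) w) := stepA
      _ = M * ∑ u ∈ words X m, ∑ v ∈ Fext X u n, f (m + n) (P (m + n) (Fin.append u v)) := by
          rw [stepB]
      _ ≤ M * ∑ u ∈ words X m,
            M * Real.exp C / ε * (C₁ * (f m (P m u) * ∑ w ∈ words X n, f n (P n w))) := by
          apply mul_le_mul_of_nonneg_left (Finset.sum_le_sum stepC) hM0.le
      _ = M ^ 2 * Real.exp C * C₁ / ε *
            ((∑ u ∈ words X m, f m (P m u)) * ∑ w ∈ words X n, f n (P n w)) := by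
          rw [Finset.mul_sum, Finset.sum_mul, Finset.mul_sum]
          exact Finset.sum_congr rfl fun u _ => by ring
  refine main.trans ?_
  have h1 : (∑ u ∈ words X m, f m (P m u)) * ∑ w ∈ words X n, f n (P n w) ≤
      Zn X f m * Zn X f n :=
    mul_le_mul (hZge m) (hZge n) (hSnn n) (hZnn m)
  calc M ^ 2 * Real.exp C * C₁ / ε *
        ((∑ u ∈ words X m, f m (P m u)) * ∑ w ∈ words X n, f n (P n w))
      ≤ M ^ 2 * Real.exp C * C₁ / ε * (Zn X f m * Zn X f n) := by
        apply mul_le_mul_of_nonneg_left h1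
        positivity
    _ = M ^ 2 * Real.exp C * C₁ / ε * Zn X f m * Zn X f n := by ring

end Paper
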